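/- For ℓ ≥ 2 and t ≥ 1, μ_t(ℓ·K_1) = K_{1,ℓ} + tℓ·K_1, and det(μ_t(ℓ·K_1)) = (t+1)ℓ − 2. -/

import Mathlib

open SimpleGraph

/-- The generalized Mycielskian `μ_t(G)`: vertices are `some (s, i)` for levels
`0 ≤ s ≤ t` (level `0` being the original vertices) plus a root `none`. -/
def Mycielskian {V : Type*} (G : SimpleGraph V) (t : ℕ) :
    SimpleGraph (Option (Fin (t + 1) × V)) where
  Adj x y :=
    match x, y with
    | none, none => False
    | none, some (s, _) => s.val = t
    | some (s, _), none => s.val = t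
    | some (s, i), some (r, j) =>
        G.Adj i j ∧ ((s.val = 0 ∧ r.val = 0) ∨ s.val + 1 = r.val ∨ r.val + 1 = s.val)
  symm := by
    constructor
    rintro (_ | ⟨s, i⟩) (_ | ⟨r, j⟩) h
    · exact h
    · exact h
    · exact h
    · exact ⟨h.1.symm, by tauto⟩
  loopless := by
    constructor
    rintro (_ | ⟨s, i⟩) h
    · exact h
    · exact G.irrefl (v := i) h.1

/-- `S` is a determining set for `G`: the only automorphism fixing `S` pointwise
is the identity. -/
def IsDetermining {V : Type*} (G : SimpleGraph V) (S : Set V) : Prop :=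
  ∀ φ : G ≃g G, (∀ v ∈ S, φ v = v) → ∀ v, φ v = v

/-- The determining number of `G`. -/
noncomputable def detNum {V : Type*} (G : SimpleGraph V) : ℕ :=
  sInf {n | ∃ S : Finset V, S.card = n ∧ IsDetermining G ↑S}

/-- A coloring is distinguishing if no nontrivial automorphism preserves all
color classes. -/
def IsDistinguishing {V : Type*} (G : SimpleGraph V) {C : Type*} (c : V → C) : Prop :=
  ∀ φ : G ≃g G, (∀ v, c (φ v) = c v) → ∀ v, φ v = v

/-- The distinguishing number of `G`. -/
noncomputable def distNum {V : Type*} (G : SimpleGraph V) : ℕ :=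
  sInf {d | ∃ c : V → Fin d, IsDistinguishing G c}

/-- The cost of 2-distinguishing: the minimum size of a color class over all
2-distinguishing colorings. -/
noncomputable def cost2 {V : Type*} (G : SimpleGraph V) [Fintype V] : ℕ :=
  sInf {n | ∃ c : V → Bool, IsDistinguishing G c ∧
    n = (Finset.univ.filter fun v => c v = true).card}

/-- The twin equivalence relation: equal open neighborhoods. -/
def twinSetoid {V : Type*} (G : SimpleGraph V) : Setoid V where
  r x y := G.neighborSet x = G.neighborSet y
  iseqv := ⟨fun _ => rfl, Eq.symm, Eq.trans⟩

/-- The twin quotient graph `G̃`. -/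
def twinQuotient {V : Type*} (G : SimpleGraph V) :
    SimpleGraph (Quotient (twinSetoid G)) where
  Adj a b := ∃ p q : V, Quotient.mk (twinSetoid G) p = a ∧
    Quotient.mk (twinSetoid G) q = b ∧ G.Adj p q
  symm := by constructor; rintro a b ⟨p, q, hp, hq, h⟩; exact ⟨q, p, hq, hp, h.symm⟩
  loopless := by
    constructor
    rintro a ⟨p, q, rfl, hq, h⟩
    have htw : G.neighborSet q = G.neighborSet p := Quotient.exact hq
    have hmem : q ∈ G.neighborSet p := h
    rw [← htw] at hmem
    exact G.irrefl (v := q) hmem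

/-- A twin cover: contains at least one of every pair of distinct twins. -/
def IsTwinCover {V : Type*} (G : SimpleGraph V) (T : Set V) : Prop :=
  ∀ x y : V, x ≠ y → G.neighborSet x = G.neighborSet y → x ∈ T ∨ y ∈ T

/-- A minimum twin cover. -/
def IsMinTwinCover {V : Type*} (G : SimpleGraph V) (T : Set V) : Prop :=
  IsTwinCover G T ∧ ∀ T' : Set V, IsTwinCover G T' → T.ncard ≤ T'.ncard

/-- Attach `ℓ` pendant vertices to the vertex `w` of `G`. -/
def attachPendants {V : Type*} (G : SimpleGraph V) (w : V) (ℓ : ℕ) :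
    SimpleGraph (V ⊕ Fin ℓ) where
  Adj x y :=
    match x, y with
    | Sum.inl a, Sum.inl b => G.Adj a b
    | Sum.inl a, Sum.inr _ => a = w
    | Sum.inr _, Sum.inl b => b = w
    | Sum.inr _, Sum.inr _ => False
  symm := by constructor; rintro (a | a) (b | b) h <;> simp_all <;> exact h.symm
  loopless := by constructor; rintro (a | a) h <;> simp_all

/-!
In `μ_t(ℓ·K_1)` the only edges join the root to the `ℓ` top-level shadows, which gives the
isomorphism. The top-level shadows are pairwise twins, and so are the `tℓ` remaining isolated
vertices. Exchanging two twins is an automorphism, so a determining set omits at most one vertex of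
each of these two classes besides possibly the root: it has at least `(t + 1)ℓ + 1 - 3` vertices.
Conversely, omitting the root, one top-level shadow and one isolated vertex leaves a determining
set: an automorphism fixing it fixes the root (the only neighbour of a fixed top-level shadow, which
exists since `ℓ ≥ 2`), hence also the omitted shadow (a neighbour of the root), and then, being
injective, the last vertex.
-/

section Determining

variable {V : Type*} {G : SimpleGraph V}

def swapTwinsIso [DecidableEq V] (a b : V) (h : ∀ z, G.Adj a z ↔ G.Adj b z) : G ≃g G where
  toEquiv := Equiv.swap a b
  map_rel_iff' {x y} := by
    have swap_adj : ∀ u z, G.Adj (Equiv.swap a b u) z ↔ G.Adj u z := by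
      intro u z
      rcases eq_or_ne u a with rfl | hua
      · rw [Equiv.swap_apply_left, h]
      rcases eq_or_ne u b with rfl | hub
      · rw [Equiv.swap_apply_right, h]
      · rw [Equiv.swap_apply_of_ne_of_ne hua hub]
    change G.Adj (Equiv.swap a b x) (Equiv.swap a b y) ↔ G.Adj x y
    rw [swap_adj, G.adj_comm, swap_adj, G.adj_comm]

theorem IsDetermining.mem_or_mem_of_twins {S : Set V} (hS : IsDetermining G S) {a b : V}
    (hab : a ≠ b) (h : ∀ z, G.Adj a z ↔ G.Adj b z) : a ∈ S ∨ b ∈ S := by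
  classical
  by_contra! hout
  have hfix : ∀ v ∈ S, swapTwinsIso a b h v = v := fun v hv =>
    Equiv.swap_apply_of_ne_of_ne (ne_of_mem_of_not_mem hv hout.1)
      (ne_of_mem_of_not_mem hv hout.2)
  have hb : swapTwinsIso a b h b = b := hS _ hfix b
  exact hab (Equiv.swap_apply_right a b ▸ hb)

/-- Two twins outside `S` could be exchanged, so `f` is injective on `Sᶜ`. -/
theorem IsDetermining.card_compl_le [Fintype V] [DecidableEq V] {S : Finset V}
    (hS : IsDetermining G S) {β : Type*} [Fintype β] (f : V → β)
    (hf : ∀ x y, f x = f y → ∀ z, G.Adj x z ↔ G.Adj y z) : Sᶜ.card ≤ Fintype.card β := by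
  refine Finset.card_le_card_of_injOn f (fun _ _ => Finset.mem_coe.mpr (Finset.mem_univ _)) ?_
  intro x hx y hy hxy
  by_contra hne
  simp only [Finset.coe_compl, Set.mem_compl_iff, Finset.mem_coe] at hx hy
  exact (hS.mem_or_mem_of_twins hne (hf x y hxy)).elim hx hy

theorem detNum_eq_card {S : Finset V} (hS : IsDetermining G S)
    (hmin : ∀ T : Finset V, IsDetermining G T → S.card ≤ T.card) : detNum G = S.card :=
  le_antisymm (Nat.sInf_le ⟨S, rfl, hS⟩) (le_csInf ⟨_, S, rfl, hS⟩ fun _ ⟨T, hT, hTdet⟩ =>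
    hT ▸ hmin T hTdet)

theorem apply_eq_self_of_forall_apply_ne (φ : G ≃g G) {T : Set V} (hfix : ∀ v ∉ T, φ v = v)
    {x : V} (hx : ∀ y ∈ T, y ≠ x → φ x ≠ y) : φ x = x := by
  by_contra hne
  have hout : φ x ∉ T := fun hT => hx _ hT hne rfl
  exact hne (φ.injective (hfix _ hout))

end Determining

section EdgelessMycielskian

variable {V : Type*} {t : ℕ}

theorem mycielskian_adj_none_some (G : SimpleGraph V) (s : Fin (t + 1)) (i : V) :
    (Mycielskian G t).Adj none (some (s, i)) ↔ s = Fin.last t := by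
  rw [Fin.ext_iff, Fin.val_last]
  rfl

theorem mycielskian_adj_some_none (G : SimpleGraph V) (s : Fin (t + 1)) (i : V) :
    (Mycielskian G t).Adj (some (s, i)) none ↔ s = Fin.last t := by
  rw [adj_comm, mycielskian_adj_none_some]

theorem mycielskian_bot_not_adj_some_some (p q : Fin (t + 1) × V) :
    ¬ (Mycielskian (⊥ : SimpleGraph V) t).Adj (some p) (some q) :=
  fun h => h.1

theorem mycielskian_bot_eq_none_of_adj {x : Option (Fin (t + 1) × V)} {p : Fin (t + 1) × V}
    (h : (Mycielskian (⊥ : SimpleGraph V) t).Adj x (some p)) : x = none := by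
  cases x with
  | none => rfl
  | some q => exact absurd h (mycielskian_bot_not_adj_some_some q p)

def mycielskianClass (t : ℕ) (x : Option (Fin (t + 1) × V)) : Option Bool :=
  x.map fun p => decide (p.1 = Fin.last t)

theorem mycielskian_bot_adj_iff_of_class_eq {x y : Option (Fin (t + 1) × V)}
    (h : mycielskianClass t x = mycielskianClass t y) (z : Option (Fin (t + 1) × V)) :
    (Mycielskian (⊥ : SimpleGraph V) t).Adj x z ↔
      (Mycielskian (⊥ : SimpleGraph V) t).Adj y z := by
  rcases x with _ | ⟨s, i⟩ <;> rcases y with _ | ⟨r, j⟩ <;>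
    simp only [mycielskianClass, Option.map_none, Option.map_some, reduceCtorEq,
      Option.some.injEq, decide_eq_decide] at h
  · rfl
  · rcases z with _ | q
    · rw [adj_comm, adj_comm _ _ none, mycielskian_adj_none_some, mycielskian_adj_none_some, h]
    · exact iff_of_false (mycielskian_bot_not_adj_some_some _ q)
        (mycielskian_bot_not_adj_some_some _ q)

theorem IsDetermining.mycielskian_bot_card_ge [Fintype V] [DecidableEq V]
    {S : Finset (Option (Fin (t + 1) × V))}
    (hS : IsDetermining (Mycielskian (⊥ : SimpleGraph V) t) S) :
    (t + 1) * Fintype.card V - 2 ≤ S.card := by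
  have hcompl : Sᶜ.card ≤ 3 := hS.card_compl_le (mycielskianClass t) fun _ _ =>
    mycielskian_bot_adj_iff_of_class_eq
  have := Finset.card_compl S
  simp only [Fintype.card_option, Fintype.card_prod, Fintype.card_fin] at this
  omega

theorem mycielskian_bot_isDetermining_compl {i j : V} (hij : i ≠ j) {s : Fin (t + 1)}
    (hs : s ≠ Fin.last t) (k : V) :
    IsDetermining (Mycielskian (⊥ : SimpleGraph V) t)
      {none, some (Fin.last t, i), some (s, k)}ᶜ := by
  intro φ hfix'
  set a : Option (Fin (t + 1) × V) := some (Fin.last t, i)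
  set b : Option (Fin (t + 1) × V) := some (s, k)
  set T : Set (Option (Fin (t + 1) × V)) := {none, a, b}
  have hfix : ∀ v ∉ T, φ v = v := hfix'
  have hleaf : φ (some (Fin.last t, j)) = some (Fin.last t, j) :=
    hfix _ (by simp [T, a, b, hij.symm, hs.symm])
  have hroot : φ none = none := by
    refine mycielskian_bot_eq_none_of_adj (p := (Fin.last t, j)) ?_
    rw [← hleaf, φ.map_adj_iff, mycielskian_adj_none_some]
  have ha : φ a = a := by
    refine apply_eq_self_of_forall_apply_ne φ hfix ?_
    rintro y (rfl | rfl | rfl) hy hφy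
    · exact hy (φ.injective (hφy.trans hroot.symm)).symm
    · exact hy rfl
    · have hadj := φ.map_adj_iff.mpr ((mycielskian_adj_none_some ⊥ _ i).mpr rfl)
      rw [hroot, hφy, mycielskian_adj_none_some] at hadj
      exact hs hadj
  have hb : φ b = b := by
    refine apply_eq_self_of_forall_apply_ne φ hfix ?_
    rintro y (rfl | rfl | rfl) hy hφy
    · exact hy (φ.injective (hφy.trans hroot.symm)).symm
    · exact hy (φ.injective (hφy.trans ha.symm)).symm
    · exact hy rfl
  intro v
  by_cases hv : v ∈ T
  · rcases hv with rfl | rfl | rfl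
    exacts [hroot, ha, hb]
  · exact hfix v hv

theorem exists_isDetermining_mycielskian_bot [Fintype V] [DecidableEq V] [Nontrivial V]
    (ht : 1 ≤ t) : ∃ S : Finset (Option (Fin (t + 1) × V)),
      S.card = (t + 1) * Fintype.card V - 2 ∧
        IsDetermining (Mycielskian (⊥ : SimpleGraph V) t) S := by
  obtain ⟨i, j, hij⟩ := exists_pair_ne V
  have hs : (0 : Fin (t + 1)) ≠ Fin.last t := by simp [Fin.ext_iff]; omega
  refine ⟨{none, some (Fin.last t, i), some (0, i)}ᶜ, ?_, ?_⟩
  · rw [Finset.card_compl, Finset.card_insert_of_notMem (by simp),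
      Finset.card_pair (by simp [hs.symm])]
    simp only [Fintype.card_option, Fintype.card_prod, Fintype.card_fin]
    omega
  · simpa only [Finset.coe_compl, Finset.coe_insert, Finset.coe_singleton] using
      mycielskian_bot_isDetermining_compl hij hs i

end EdgelessMycielskian

section Isomorphism

def mycielskianBotEquiv (V : Type*) (t : ℕ) :
    Option (Fin (t + 1) × V) ≃ (Unit ⊕ V) ⊕ (Fin t × V) where
  toFun
    | none => .inl (.inl ())
    | some (s, i) => if h : s = Fin.last t then .inl (.inr i) else .inr (s.castPred h, i)
  invFun
    | .inl (.inl ()) => none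
    | .inl (.inr i) => some (Fin.last t, i)
    | .inr (s, i) => some (s.castSucc, i)
  left_inv := by
    rintro (_ | ⟨s, i⟩)
    · rfl
    · by_cases h : s = Fin.last t <;> simp [h]
  right_inv := by
    rintro ((_ | i) | ⟨s, i⟩)
    · rfl
    · simp
    · simp [Fin.castSucc_ne_last]

def mycielskianBotIso (V : Type*) (t : ℕ) :
    Mycielskian (⊥ : SimpleGraph V) t ≃g
      completeBipartiteGraph Unit V ⊕g (⊥ : SimpleGraph (Fin t × V)) where
  toEquiv := mycielskianBotEquiv V t
  map_rel_iff' {x y} := by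
    rcases x with _ | ⟨s, i⟩ <;> rcases y with _ | ⟨r, j⟩
    all_goals
      simp only [mycielskianBotEquiv, Equiv.coe_fn_mk]
      try split_ifs
    all_goals simp_all [mycielskian_adj_none_some, mycielskian_adj_some_none,
      mycielskian_bot_not_adj_some_some]

end Isomorphism

/-- `μ_t(ℓ·K_1) = K_{1,ℓ} + tℓ·K_1` and
`det(μ_t(ℓ·K_1)) = (t+1)ℓ − 2`. -/
theorem mycielskian_edgeless (ℓ t : ℕ) (hℓ : 2 ≤ ℓ) (ht : 1 ≤ t) :
    Nonempty (Mycielskian (⊥ : SimpleGraph (Fin ℓ)) t ≃g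
      (completeBipartiteGraph Unit (Fin ℓ) ⊕g (⊥ : SimpleGraph (Fin (t * ℓ))))) ∧
    detNum (Mycielskian (⊥ : SimpleGraph (Fin ℓ)) t) = (t + 1) * ℓ - 2 := by
  have botIso : (⊥ : SimpleGraph (Fin t × Fin ℓ)) ≃g (⊥ : SimpleGraph (Fin (t * ℓ))) :=
    ⟨finProdFinEquiv, by simp⟩
  refine ⟨⟨(mycielskianBotIso (Fin ℓ) t).trans (Iso.sumCongr Iso.refl botIso)⟩, ?_⟩
  have : Nontrivial (Fin ℓ) := Fin.nontrivial_iff_two_le.mpr hℓ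
  obtain ⟨S, hcard, hS⟩ := exists_isDetermining_mycielskian_bot (V := Fin ℓ) ht
  rw [Fintype.card_fin] at hcard
  rw [detNum_eq_card hS fun T hT => ?_, hcard]
  simpa [hcard] using hT.mycielskian_bot_card_ge
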